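/- arXiv:1204.2779 — 2 statements merged into one kernel-verified Lean document; each statement's English description precedes it below -/
import Mathlib

section
/- For every complex number q with |q| < 1, the infinite product ∏_{n=1}^∞ (1 − qⁿ)³ equals the convergent series Σ_{k=0}^∞ (−1)^k (2k+1) q^{k(k+1)/2}. -/
/-!
By the q-binomial theorem, `∏_{j<2n+1} (q^n - x q^j) = Σ_k (-1)^k q^(k choose 2) [2n+1, k] x^k
q^(n(2n+1-k))`. Pulling `q^j` out of the factors with `j < n` and `q^n` out of the others turns
the left side into a power of `q` times the balanced product
`∏_{i=1}^n (q^i - x) ∏_{i=0}^n (1 - x q^i)`.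
On the right the terms `k = n - j` and `k = n + 1 + j` carry the same power `q^((j+1) choose 2)`
and equal Gaussian binomials, and their signs are opposite. Hence both sides are divisible by
`1 - x`, and after dividing, `x = 1` gives the finite identity
`Σ_{j≤n} (-1)^j (2j+1) q^((j+1) choose 2) [2n+1, n-j] = (q;q)_n²`.

Multiply it by `(q;q)_n` and write `[2n+1, n-j] = (q;q)_{2n+1} / ((q;q)_{n-j} (q;q)_{n+1+j})`.
For `|q| < 1`, `(q;q)_n` tends to the nonzero limit `∏ (1 - q^(n+1))`. So as `n → ∞` each term
tends to the `j`-th term of the series, and it is bounded by a fixed multiple of that term's norm.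
Tannery's theorem therefore lets the limit pass through the sum.
-/

open Finset Filter Topology

lemma Nat.succ_choose_two (k : ℕ) : (k + 1).choose 2 = k.choose 2 + k := by
  rw [Nat.choose_succ_succ', Nat.choose_one_right, add_comm]

section QBinomial

variable {R S : Type*} [CommRing R] [CommRing S]

def qBinomial (q : R) : ℕ → ℕ → R
  | _, 0 => 1
  | 0, _ + 1 => 0
  | m + 1, k + 1 => q ^ (k + 1) * qBinomial q m (k + 1) + qBinomial q m k

def qPochhammer (q : R) (n : ℕ) : R := ∏ i ∈ range n, (1 - q ^ (i + 1))

variable (q : R)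

@[simp] lemma qBinomial_zero_right (m : ℕ) : qBinomial q m 0 = 1 := by cases m <;> rfl

lemma qBinomial_succ_succ (m k : ℕ) :
    qBinomial q (m + 1) (k + 1) = q ^ (k + 1) * qBinomial q m (k + 1) + qBinomial q m k := rfl

lemma qBinomial_eq_zero_of_lt {m k : ℕ} (h : m < k) : qBinomial q m k = 0 := by
  induction m generalizing k with
  | zero => obtain ⟨k, rfl⟩ := Nat.exists_eq_succ_of_ne_zero h.ne_bot; rfl
  | succ m ih =>
    obtain ⟨k, rfl⟩ := Nat.exists_eq_succ_of_ne_zero (Nat.ne_zero_of_lt h)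
    rw [qBinomial_succ_succ, ih (by omega), ih (by omega), mul_zero, add_zero]

@[simp] lemma qBinomial_self (m : ℕ) : qBinomial q m m = 1 := by
  induction m with
  | zero => rfl
  | succ m ih => rw [qBinomial_succ_succ, qBinomial_eq_zero_of_lt q m.lt_succ_self, ih]; ring

@[simp] lemma qPochhammer_zero : qPochhammer q 0 = 1 := prod_range_zero _

lemma qPochhammer_succ (n : ℕ) :
    qPochhammer q (n + 1) = qPochhammer q n * (1 - q ^ (n + 1)) :=
  prod_range_succ _ n

lemma qBinomial_add_mul_qPochhammer : ∀ k r : ℕ,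
    qBinomial q (k + r) k * qPochhammer q k * qPochhammer q r = qPochhammer q (k + r)
  | 0, r => by simp
  | k + 1, 0 => by simp
  | k + 1, r + 1 => by
    have h₁ := qBinomial_add_mul_qPochhammer (k + 1) r
    have h₂ := qBinomial_add_mul_qPochhammer k (r + 1)
    rw [show k + (r + 1) = k + 1 + r by omega] at h₂
    rw [show k + 1 + (r + 1) = k + 1 + r + 1 by omega, qBinomial_succ_succ, qPochhammer_succ,
      qPochhammer_succ, qPochhammer_succ] at *
    linear_combination q ^ (k + 1) * (1 - q ^ (r + 1)) * h₁ + (1 - q ^ (k + 1)) * h₂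

lemma qBinomial_symm_add [IsDomain R] (hq : ∀ n, qPochhammer q n ≠ 0) (k r : ℕ) :
    qBinomial q (k + r) k = qBinomial q (k + r) r := by
  have h₁ := qBinomial_add_mul_qPochhammer q k r
  have h₂ := qBinomial_add_mul_qPochhammer q r k
  rw [add_comm r k] at h₂
  refine mul_right_cancel₀ (mul_ne_zero (hq k) (hq r)) ?_
  linear_combination h₁ - h₂

lemma map_qBinomial (f : R →+* S) (m k : ℕ) : f (qBinomial q m k) = qBinomial (f q) m k := by
  induction m generalizing k with
  | zero => cases k <;> simp [qBinomial]
  | succ m ih => cases k <;> simp [qBinomial_succ_succ, ih]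

lemma map_qPochhammer (f : R →+* S) (n : ℕ) : f (qPochhammer q n) = qPochhammer (f q) n := by
  simp [qPochhammer]

lemma prod_range_pow_succ_sub_one (n : ℕ) :
    ∏ i ∈ range n, (q ^ (i + 1) - 1) = (-1) ^ n * qPochhammer q n := by
  calc _ = ∏ i ∈ range n, (-1) * (1 - q ^ (i + 1)) := prod_congr rfl fun i _ => by ring
    _ = _ := by rw [prod_mul_distrib, prod_const, card_range, qPochhammer]

theorem prod_range_sub_mul_pow (x y : R) (m : ℕ) :
    ∏ j ∈ range m, (y - x * q ^ j) = ∑ p ∈ antidiagonal m,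
      (-1) ^ p.1 * q ^ p.1.choose 2 * qBinomial q m p.1 * x ^ p.1 * y ^ p.2 := by
  induction m generalizing x with
  | zero => simp
  | succ m ih =>
    set u : ℕ × ℕ → R := fun p =>
      (-1) ^ p.1 * q ^ (p.1.choose 2 + p.1) * qBinomial q m p.1 * x ^ p.1 * y ^ p.2 with hu
    have hshift : ∏ j ∈ range m, (y - x * q ^ (j + 1)) = ∑ p ∈ antidiagonal m, u p := by
      simp_rw [pow_succ', ← mul_assoc, ih (x * q)]
      exact sum_congr rfl fun p _ => by ring
    have hy : y * ∑ p ∈ antidiagonal m, u p =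
        y ^ (m + 1) + ∑ p ∈ antidiagonal m, u (p.1 + 1, p.2) := by
      have h := (Nat.sum_antidiagonal_succ' (n := m) (f := u)).symm.trans
        Nat.sum_antidiagonal_succ
      simp only [hu, qBinomial_eq_zero_of_lt q m.lt_succ_self, mul_zero, zero_mul, zero_add,
        pow_zero, Nat.choose_zero_succ, qBinomial_zero_right, mul_one, one_mul] at h
      rw [← h, mul_sum]
      exact sum_congr rfl fun p _ => by ring
    have hpascal (p : ℕ × ℕ) : (-1) ^ (p.1 + 1) * q ^ (p.1 + 1).choose 2 *
        qBinomial q (m + 1) (p.1 + 1) * x ^ (p.1 + 1) * y ^ p.2 = u (p.1 + 1, p.2) - x * u p := by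
      simp only [hu, qBinomial_succ_succ, Nat.succ_choose_two]
      ring
    rw [prod_range_succ', hshift, Nat.sum_antidiagonal_succ, sum_congr rfl fun p _ => hpascal p,
      sum_sub_distrib, ← mul_sum]
    simp only [pow_zero, qBinomial_zero_right, Nat.choose_zero_succ]
    linear_combination hy

lemma prod_range_pow_sub_mul_pow (x : R) (n : ℕ) :
    ∏ j ∈ range n, (q ^ n - x * q ^ j) =
      q ^ n.choose 2 * ∏ i ∈ range n, (q ^ (i + 1) - x) := by
  induction n with
  | zero => simp
  | succ n ih =>
    have h : ∏ j ∈ range n, (q ^ (n + 1) - x * q ^ (j + 1)) =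
        q ^ n * ∏ j ∈ range n, (q ^ n - x * q ^ j) := by
      calc _ = ∏ j ∈ range n, q * (q ^ n - x * q ^ j) := prod_congr rfl fun j _ => by ring
        _ = _ := by rw [prod_mul_distrib, prod_const, card_range]
    rw [prod_range_succ', h, ih, prod_range_succ, Nat.succ_choose_two]
    ring

lemma prod_range_two_mul_add_one_sub_mul_pow (x : R) (n : ℕ) :
    ∏ j ∈ range (2 * n + 1), (q ^ n - x * q ^ j) = q ^ (n.choose 2 + n * (n + 1)) *
      ((∏ i ∈ range n, (q ^ (i + 1) - x)) * ∏ i ∈ range (n + 1), (1 - x * q ^ i)) := by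
  have h : ∏ j ∈ range (n + 1), (q ^ n - x * q ^ (n + j)) =
      q ^ (n * (n + 1)) * ∏ j ∈ range (n + 1), (1 - x * q ^ j) := by
    calc _ = ∏ j ∈ range (n + 1), q ^ n * (1 - x * q ^ j) := prod_congr rfl fun j _ => by ring
      _ = _ := by rw [prod_mul_distrib, prod_const, card_range, pow_mul]
  rw [show 2 * n + 1 = n + (n + 1) by ring, prod_range_add, prod_range_pow_sub_mul_pow, h,
    pow_add]
  ring

theorem prod_pow_sub_mul_prod_one_sub_eq_sum [IsDomain R] (hq₀ : q ≠ 0)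
    (hq : ∀ n, qPochhammer q n ≠ 0) (x : R) (n : ℕ) :
    (∏ i ∈ range n, (q ^ (i + 1) - x)) * ∏ i ∈ range (n + 1), (1 - x * q ^ i) =
      (-1) ^ n * ∑ j ∈ range (n + 1), (-1) ^ j * q ^ (j + 1).choose 2 *
        qBinomial q (2 * n + 1) (n - j) * (x ^ (n - j) - x ^ (n + 1 + j)) := by
  refine mul_left_cancel₀ (pow_ne_zero (n.choose 2 + n * (n + 1)) hq₀) ?_
  rw [← prod_range_two_mul_add_one_sub_mul_pow, prod_range_sub_mul_pow,
    Nat.sum_antidiagonal_eq_sum_range_succ (fun a b =>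
      (-1) ^ a * q ^ a.choose 2 * qBinomial q (2 * n + 1) a * x ^ a * (q ^ n) ^ b),
    show (2 * n + 1).succ = (n + 1) + (n + 1) by omega, sum_range_add, ← sum_range_reflect,
    ← sum_add_distrib, mul_sum, mul_sum]
  refine sum_congr rfl fun j hj => ?_
  obtain ⟨e, rfl⟩ := Nat.exists_eq_add_of_le (Nat.lt_succ_iff.mp (mem_range.mp hj))
  have hsymm : qBinomial q (2 * (j + e) + 1) (j + e + 1 + j) = qBinomial q (2 * (j + e) + 1) e := by
    rw [show 2 * (j + e) + 1 = e + (2 * j + e + 1) by ring,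
      show j + e + 1 + j = 2 * j + e + 1 by ring, qBinomial_symm_add q hq]
  have hpow₁ : q ^ e.choose 2 * (q ^ (j + e)) ^ (2 * j + e + 1) =
      q ^ ((j + e).choose 2 + (j + e) * (j + e + 1)) * q ^ (j + 1).choose 2 := by
    rw [← pow_mul, ← pow_add, ← pow_add]
    congr 1
    apply Nat.cast_injective (R := ℚ)
    push_cast [Nat.cast_choose_two]
    ring
  have hpow₂ : q ^ (j + e + 1 + j).choose 2 * (q ^ (j + e)) ^ e =
      q ^ ((j + e).choose 2 + (j + e) * (j + e + 1)) * q ^ (j + 1).choose 2 := by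
    rw [← pow_mul, ← pow_add, ← pow_add]
    congr 1
    apply Nat.cast_injective (R := ℚ)
    push_cast [Nat.cast_choose_two]
    ring
  have hsign : ((-1 : R) ^ j) ^ 2 = 1 := by
    rw [← pow_mul, mul_comm, pow_mul, neg_one_sq, one_pow]
  rw [show j + e + 1 - 1 - j = e by omega, show j + e - j = e by omega,
    show 2 * (j + e) + 1 - e = 2 * j + e + 1 by omega,
    show 2 * (j + e) + 1 - (j + e + 1 + j) = e by omega, hsymm]
  linear_combination (-1) ^ e * qBinomial q (2 * (j + e) + 1) e * x ^ e * hpow₁ +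
    (-1) ^ (j + e + 1 + j) * qBinomial q (2 * (j + e) + 1) e * x ^ (j + e + 1 + j) * hpow₂ -
    q ^ ((j + e).choose 2 + (j + e) * (j + e + 1)) * q ^ (j + 1).choose 2 * (-1) ^ e *
      qBinomial q (2 * (j + e) + 1) e * x ^ e * hsign

def jacobiCoeff (k : ℕ) : R := (-1) ^ k * (2 * k + 1) * q ^ (k + 1).choose 2

open Polynomial in
theorem prod_pow_sub_X_mul_prod_one_sub_X_eq_sum [IsDomain R] (hq₀ : q ≠ 0)
    (hq : ∀ n, qPochhammer q n ≠ 0) (n : ℕ) :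
    (∏ i ∈ range n, (C q ^ (i + 1) - X)) * ∏ i ∈ range n, (1 - X * C q ^ (i + 1)) =
      (-1) ^ n * ∑ j ∈ range (n + 1), (-1) ^ j * C q ^ (j + 1).choose 2 *
        qBinomial (C q) (2 * n + 1) (n - j) *
          (X ^ (n - j) * ∑ i ∈ range (2 * j + 1), X ^ i) := by
  have h := prod_pow_sub_mul_prod_one_sub_eq_sum (C q) (C_ne_zero.2 hq₀)
    (fun m => by rw [← map_qPochhammer]; exact C_ne_zero.2 (hq m)) X n
  have hgeom : ∀ j ∈ range (n + 1), (X : R[X]) ^ (n - j) - X ^ (n + 1 + j) =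
      (1 - X) * (X ^ (n - j) * ∑ i ∈ range (2 * j + 1), X ^ i) := fun j hj => by
    rw [mul_left_comm, mul_neg_geom_sum, mul_sub, mul_one, ← pow_add]
    congr 2
    have := mem_range.mp hj
    omega
  have hX : (1 - X : R[X]) ≠ 0 := fun h => by simpa using congrArg (eval 0) h
  refine mul_left_cancel₀ hX ?_
  calc _ = (∏ i ∈ range n, (C q ^ (i + 1) - X)) *
        ∏ i ∈ range (n + 1), (1 - X * C q ^ i) := by
        rw [prod_range_succ' (fun i => 1 - X * C q ^ i)]; ring
    _ = _ := h
    _ = _ := by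
        rw [mul_left_comm]
        congr 1
        rw [mul_sum]
        exact sum_congr rfl fun j hj => by rw [hgeom j hj]; ring

open Polynomial in
theorem sum_jacobiCoeff_mul_qBinomial_of_isDomain [IsDomain R] (hq₀ : q ≠ 0)
    (hq : ∀ n, qPochhammer q n ≠ 0) (n : ℕ) :
    ∑ j ∈ range (n + 1), jacobiCoeff q j * qBinomial q (2 * n + 1) (n - j) =
      qPochhammer q n ^ 2 := by
  have h := congrArg (eval 1) (prod_pow_sub_X_mul_prod_one_sub_X_eq_sum q hq₀ hq n)
  simp only [eval_mul, eval_prod, eval_finsetSum, eval_pow, eval_sub, eval_C, eval_X, eval_one,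
    eval_neg, one_pow, one_mul, ← map_qBinomial, sum_const, card_range, nsmul_one,
    prod_range_pow_succ_sub_one] at h
  refine mul_left_cancel₀ (pow_ne_zero n (neg_ne_zero.2 one_ne_zero) : (-1 : R) ^ n ≠ 0) ?_
  rw [sq, ← mul_assoc]
  refine (h.trans (congrArg _ (sum_congr rfl fun j _ => ?_))).symm
  rw [jacobiCoeff]
  push_cast
  ring

open Polynomial in
/-- The identity is one between polynomials in `q`, so it suffices to prove it for `q = X` in
`ℤ[X]`, where `q` is neither zero nor a root of unity. -/
theorem sum_jacobiCoeff_mul_qBinomial (n : ℕ) :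
    ∑ j ∈ range (n + 1), jacobiCoeff q j * qBinomial q (2 * n + 1) (n - j) =
      qPochhammer q n ^ 2 := by
  have hX (m : ℕ) : qPochhammer (X : ℤ[X]) m ≠ 0 := fun h => by
    simpa [qPochhammer, eval_prod] using congrArg (eval 0) h
  have h := congrArg (eval₂RingHom (Int.castRingHom R) q)
    (sum_jacobiCoeff_mul_qBinomial_of_isDomain X X_ne_zero hX n)
  simp only [jacobiCoeff, map_sum, map_mul, map_pow, map_neg, map_one, map_add, map_natCast,
    map_ofNat, map_qBinomial, map_qPochhammer] at h
  simpa [jacobiCoeff] using h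

end QBinomial

lemma qBinomial_add_eq_div {K : Type*} [Field K] {q : K} (hq : ∀ n, qPochhammer q n ≠ 0)
    (k r : ℕ) :
    qBinomial q (k + r) k = qPochhammer q (k + r) / (qPochhammer q k * qPochhammer q r) := by
  rw [eq_div_iff (mul_ne_zero (hq k) (hq r)), ← mul_assoc, qBinomial_add_mul_qPochhammer]

section Complex

variable {q : ℂ}

lemma one_sub_pow_succ_ne_zero (hq : ‖q‖ < 1) (i : ℕ) : 1 - q ^ (i + 1) ≠ 0 := by
  refine sub_ne_zero.2 fun h => ?_
  have := pow_lt_one₀ (norm_nonneg q) hq i.succ_ne_zero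
  rw [← norm_pow, ← h, norm_one] at this
  exact this.false

lemma qPochhammer_ne_zero (hq : ‖q‖ < 1) (n : ℕ) : qPochhammer q n ≠ 0 :=
  prod_ne_zero_iff.2 fun i _ => one_sub_pow_succ_ne_zero hq i

lemma tendsto_qPochhammer (hq : ‖q‖ < 1) :
    Tendsto (qPochhammer q) atTop (𝓝 (∏' n, (1 - q ^ (n + 1)))) :=
  (ModularForm.multipliable_one_sub_pow hq).hasProd.tendsto_prod_nat

lemma tprod_one_sub_pow_ne_zero (hq : ‖q‖ < 1) : ∏' n, (1 - q ^ (n + 1)) ≠ 0 := by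
  simpa [sub_eq_add_neg] using tprod_one_add_ne_zero_of_summable (f := fun n => -q ^ (n + 1))
    (by simpa [sub_eq_add_neg] using one_sub_pow_succ_ne_zero hq)
    (by simpa [summable_nat_add_iff] using summable_geometric_of_lt_one (norm_nonneg q) hq)

lemma norm_jacobiCoeff_le (hq : ‖q‖ ≤ 1) (k : ℕ) :
    ‖jacobiCoeff q k‖ ≤ (2 * k + 1) * ‖q‖ ^ k := by
  have hk : k ≤ (k + 1).choose 2 := by rw [Nat.succ_choose_two]; exact Nat.le_add_left k _
  rw [jacobiCoeff, norm_mul, norm_mul, norm_pow, norm_pow, norm_neg, norm_one, one_pow, one_mul]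
  gcongr ?_ * ?_
  · exact_mod_cast (Complex.norm_natCast (2 * k + 1)).le
  · exact pow_le_pow_of_le_one (norm_nonneg q) hq hk

lemma summable_norm_jacobiCoeff (hq : ‖q‖ < 1) : Summable fun k => ‖jacobiCoeff q k‖ := by
  have hr : ‖‖q‖‖ < 1 := by rwa [norm_norm]
  refine Summable.of_nonneg_of_le (fun k => norm_nonneg _) (norm_jacobiCoeff_le hq.le) ?_
  simpa [add_mul, mul_assoc] using
    ((summable_pow_mul_geometric_of_norm_lt_one 1 hr).mul_left 2).add
      (summable_geometric_of_lt_one (norm_nonneg q) hq)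

noncomputable def jacobiApprox (q : ℂ) (n j : ℕ) : ℂ :=
  if j ≤ n then jacobiCoeff q j * (qPochhammer q n * qBinomial q (2 * n + 1) (n - j)) else 0

lemma tsum_jacobiApprox (q : ℂ) (n : ℕ) : ∑' j, jacobiApprox q n j = qPochhammer q n ^ 3 := by
  rw [tsum_eq_sum (s := range (n + 1)) fun j hj => by
    rw [jacobiApprox, if_neg (by simpa [Nat.lt_succ_iff] using hj)]]
  calc ∑ j ∈ range (n + 1), jacobiApprox q n j
      = qPochhammer q n *
          ∑ j ∈ range (n + 1), jacobiCoeff q j * qBinomial q (2 * n + 1) (n - j) := by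
        rw [mul_sum]
        exact sum_congr rfl fun j hj => by
          rw [jacobiApprox, if_pos (Nat.lt_succ_iff.mp (mem_range.mp hj))]; ring
    _ = qPochhammer q n ^ 3 := by rw [sum_jacobiCoeff_mul_qBinomial]; ring

lemma jacobiApprox_eq_of_le (hq : ‖q‖ < 1) {n j : ℕ} (h : j ≤ n) :
    jacobiApprox q n j = jacobiCoeff q j * (qPochhammer q n * qPochhammer q (2 * n + 1) *
      (qPochhammer q (n - j))⁻¹ * (qPochhammer q (n + 1 + j))⁻¹) := by
  have hdiv := qBinomial_add_eq_div (qPochhammer_ne_zero hq) (n - j) (n + 1 + j)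
  rw [show n - j + (n + 1 + j) = 2 * n + 1 by omega] at hdiv
  rw [jacobiApprox, if_pos h, hdiv, div_eq_mul_inv, mul_inv]
  ring

lemma tendsto_jacobiApprox (hq : ‖q‖ < 1) (j : ℕ) :
    Tendsto (fun n => jacobiApprox q n j) atTop (𝓝 (jacobiCoeff q j)) := by
  have hP := tendsto_qPochhammer hq
  have hL := tprod_one_sub_pow_ne_zero hq
  have h₁ : Tendsto (fun n : ℕ => 2 * n + 1) atTop atTop :=
    tendsto_atTop_mono (fun n => (by omega : n ≤ 2 * n + 1)) tendsto_id
  have h₂ : Tendsto (fun n : ℕ => n + 1 + j) atTop atTop :=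
    tendsto_atTop_mono (fun n => (by omega : n ≤ n + 1 + j)) tendsto_id
  have h := (((hP.mul (hP.comp h₁)).mul ((hP.comp (tendsto_sub_atTop_nat j)).inv₀ hL)).mul
    ((hP.comp h₂).inv₀ hL)).const_mul (jacobiCoeff q j)
  rw [mul_inv_cancel_right₀ hL, mul_inv_cancel₀ hL, mul_one] at h
  exact h.congr' ((eventually_ge_atTop j).mono fun n hn => (jacobiApprox_eq_of_le hq hn).symm)

lemma exists_norm_jacobiApprox_le (hq : ‖q‖ < 1) :
    ∃ C, ∀ n j, ‖jacobiApprox q n j‖ ≤ C * ‖jacobiCoeff q j‖ := by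
  have hP := tendsto_qPochhammer hq
  obtain ⟨A, hA⟩ := hP.norm.bddAbove_range
  obtain ⟨B, hB⟩ := (hP.inv₀ (tprod_one_sub_pow_ne_zero hq)).norm.bddAbove_range
  have hA' (n : ℕ) : ‖qPochhammer q n‖ ≤ A := hA ⟨n, rfl⟩
  have hB' (n : ℕ) : ‖(qPochhammer q n)⁻¹‖ ≤ B := hB ⟨n, rfl⟩
  have hA₀ : 0 ≤ A := (norm_nonneg _).trans (hA' 0)
  have hB₀ : 0 ≤ B := (norm_nonneg _).trans (hB' 0)
  refine ⟨A * A * B * B, fun n j => ?_⟩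
  by_cases h : j ≤ n
  · rw [jacobiApprox_eq_of_le hq h, norm_mul, mul_comm, norm_mul, norm_mul, norm_mul]
    gcongr <;> bound
  · rw [jacobiApprox, if_neg h, norm_zero]
    positivity

end Complex

theorem stmt11 (q : ℂ) (hq : ‖q‖ < 1) :
    Summable (fun k : ℕ => ((-1 : ℂ) ^ k * (2 * (k : ℂ) + 1)) * q ^ (k * (k + 1) / 2)) ∧
    (∏' n : ℕ, (1 - q ^ (n + 1)) ^ 3)
      = ∑' k : ℕ, ((-1 : ℂ) ^ k * (2 * (k : ℂ) + 1)) * q ^ (k * (k + 1) / 2) := by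
  have hcoeff : (fun k : ℕ => ((-1 : ℂ) ^ k * (2 * (k : ℂ) + 1)) * q ^ (k * (k + 1) / 2)) =
      jacobiCoeff q := funext fun k => by
    rw [jacobiCoeff, Nat.choose_two_right, Nat.add_sub_cancel, mul_comm k]
  have hsum := summable_norm_jacobiCoeff hq
  obtain ⟨C, hC⟩ := exists_norm_jacobiApprox_le hq
  have hlim := tendsto_tsum_of_dominated_convergence (hsum.mul_left C) (tendsto_jacobiApprox hq)
    (.of_forall (hC ·))
  simp only [tsum_jacobiApprox] at hlim
  rw [hcoeff, (ModularForm.multipliable_one_sub_pow hq).tprod_pow]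
  exact ⟨hsum.of_norm, tendsto_nhds_unique ((tendsto_qPochhammer hq).pow 3) hlim⟩
end

section
/- For every complex q with |q| < 1: Σ_{n=0}^∞ q^{n²}·(−q; q²)_n/(−q⁴; q⁴)_n = Σ_{n=0}^∞ q^{2n²}·(−q²; q⁴)_n/(−q⁴; q⁴)_n + q·Σ_{n=0}^∞ q^{2n(n+2)}·(−q²; q⁴)_n/(−q⁴; q⁴)_n. That is, U₀(q) = S₀(q²) + q·S₁(q²). -/
/-!
Deform both sides by a parameter `z`:
`lhs q z = Σ q^{n²} zⁿ (-q; q²)ₙ / (-q⁴z; q⁴)ₙ` and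
`rhs q z = Σ q^{2n²} zⁿ (-q²z; q⁴)ₙ (1 + q^{4n+1} z) / (-q⁴z; q⁴)ₙ`.
Both satisfy the `q⁴`-difference equation
`(1 + q⁴z) F(z) = (1 + q⁴z)(1 + qz) + q²z(1 + q²z) F(q⁴z)`:
for `rhs` by shifting the summation index, for `lhs` after a telescoping rearrangement.
So `d = lhs - rhs` satisfies `d(z) = β(z) d(q⁴z)` with `β(z) → 0` as `z → 0`; as `d` is bounded on
the closed unit disc, iterating along `z = q^{4j}` forces `d(1) = 0`.
-/

/-- The finite q-Pochhammer symbol `(a; q)_n = ∏_{k=0}^{n-1} (1 - a q^k)`. -/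
def qPoch (a q : ℂ) (n : ℕ) : ℂ := ∏ k ∈ Finset.range n, (1 - a * q ^ k)

open Finset Filter Topology

section QPochhammer

variable {a q : ℂ}

lemma qPoch_zero (a q : ℂ) : qPoch a q 0 = 1 := prod_range_zero _

lemma qPoch_succ (a q : ℂ) (n : ℕ) : qPoch a q (n + 1) = qPoch a q n * (1 - a * q ^ n) :=
  prod_range_succ _ _

lemma qPoch_succ' (a q : ℂ) (n : ℕ) : qPoch a q (n + 1) = (1 - a) * qPoch (a * q) q n := by
  simp only [qPoch, prod_range_succ', pow_succ, pow_zero, mul_one, mul_assoc, mul_comm q]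
  rw [mul_comm]

lemma qPoch_mul_self (ha : a ≠ 1) (n : ℕ) :
    qPoch (a * q) q n = qPoch a q n * (1 - a * q ^ n) / (1 - a) := by
  rw [eq_div_iff (sub_ne_zero.2 ha.symm), ← qPoch_succ, qPoch_succ', mul_comm]

lemma norm_qPoch_le (hq : ‖q‖ ≤ 1) (n : ℕ) : ‖qPoch a q n‖ ≤ (1 + ‖a‖) ^ n := by
  rw [qPoch, norm_prod]
  refine (prod_le_prod (fun _ _ ↦ norm_nonneg _) fun k _ ↦ (norm_sub_le _ _).trans ?_).trans_eq
    (by rw [prod_const, card_range])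
  rw [norm_one, norm_mul, norm_pow]
  gcongr
  exact mul_le_of_le_one_right (norm_nonneg a) (pow_le_one₀ (norm_nonneg q) hq)

lemma pow_le_norm_qPoch (ha : ‖a‖ ≤ 1) (hq : ‖q‖ ≤ 1) (n : ℕ) :
    (1 - ‖a‖) ^ n ≤ ‖qPoch a q n‖ := by
  rw [qPoch, norm_prod]
  refine (prod_le_prod (fun _ _ ↦ sub_nonneg.2 ha) fun k _ ↦ ?_).trans_eq'
    (by rw [prod_const, card_range])
  calc 1 - ‖a‖ ≤ 1 - ‖a * q ^ k‖ := by
        rw [norm_mul, norm_pow]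
        gcongr
        exact mul_le_of_le_one_right (norm_nonneg a) (pow_le_one₀ (norm_nonneg q) hq)
    _ ≤ ‖1 - a * q ^ k‖ := by simpa using norm_sub_norm_le (1 : ℂ) (a * q ^ k)

lemma qPoch_ne_zero (ha : ‖a‖ < 1) (hq : ‖q‖ ≤ 1) (n : ℕ) : qPoch a q n ≠ 0 :=
  norm_pos_iff.1 <| (pow_pos (sub_pos.2 ha) n).trans_le (pow_le_norm_qPoch ha.le hq n)

end QPochhammer

lemma summable_pow_sq_mul_pow {r : ℝ} (hr₀ : 0 ≤ r) (hr : r < 1) (c : ℝ) :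
    Summable fun n : ℕ ↦ r ^ n ^ 2 * c ^ n := by
  have hlim : Tendsto (fun n : ℕ ↦ ‖r ^ n * c‖) atTop (𝓝 0) := by
    simpa using ((tendsto_pow_atTop_nhds_zero_of_lt_one hr₀ hr).mul_const c).norm
  refine summable_geometric_two.of_norm_bounded_eventually ?_
  rw [Nat.cofinite_eq_atTop]
  filter_upwards [hlim.eventually_le_const (by norm_num : (0 : ℝ) < 1 / 2)] with n hn
  rw [sq, pow_mul, ← mul_pow, norm_pow, one_div]
  exact pow_le_pow_left₀ (norm_nonneg _) (by simpa using hn) n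

theorem eq_zero_of_eq_mul_succ {R : Type*} [NormedRing R] {d β : ℕ → R}
    (hrec : ∀ j, d j = β j * d (j + 1)) (hβ : Tendsto β atTop (𝓝 0))
    (hd : ∃ C, ∀ j, ‖d j‖ ≤ C) (j : ℕ) : d j = 0 := by
  obtain ⟨C, hC⟩ := hd
  obtain ⟨j₀, hj₀⟩ := eventually_atTop.1 <|
    (tendsto_zero_iff_norm_tendsto_zero.1 hβ).eventually_le_const (by norm_num : (0 : ℝ) < 1 / 2)
  have decay (K : ℕ) : ∀ j ≥ j₀, ‖d j‖ ≤ (1 / 2) ^ K * C := by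
    induction K with
    | zero => simpa using fun j _ ↦ hC j
    | succ K ih =>
      intro j hj
      calc ‖d j‖ ≤ ‖β j‖ * ‖d (j + 1)‖ := hrec j ▸ norm_mul_le _ _
        _ ≤ 1 / 2 * ((1 / 2) ^ K * C) :=
          mul_le_mul (hj₀ j hj) (ih _ (by omega)) (norm_nonneg _) (by norm_num)
        _ = (1 / 2) ^ (K + 1) * C := by ring
  have tail (j : ℕ) (hj : j₀ ≤ j) : d j = 0 := by
    have hK : Tendsto (fun K : ℕ ↦ (1 / 2 : ℝ) ^ K * C) atTop (𝓝 0) := by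
      simpa using (tendsto_pow_atTop_nhds_zero_of_lt_one (r := (1 / 2 : ℝ)) (by norm_num)
        (by norm_num)).mul_const C
    exact norm_le_zero_iff.1 (ge_of_tendsto' hK fun K ↦ decay K j hj)
  exact Nat.decreasingInduction (motive := fun k _ ↦ d k = 0)
    (fun k _ h ↦ by rw [hrec k, h, mul_zero]) (tail _ (le_max_right j j₀)) (le_max_left j j₀)

lemma tsum_sub_succ {G : Type*} [AddCommGroup G] [TopologicalSpace G] [IsTopologicalAddGroup G]
    [T2Space G] {f : ℕ → G} (hf : Summable f) : ∑' n, (f n - f (n + 1)) = f 0 := by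
  rw [hf.tsum_sub ((summable_nat_add_iff 1).2 hf), hf.tsum_eq_zero_add, add_sub_cancel_right]

noncomputable section

namespace MockTheta8

variable {q z : ℂ}

/- `lhs q 1` is `U₀(q)`; the weight `1 + q ^ (4 * n + 1) * z` in `rhsTerm` makes `rhs q 1` split
as `S₀(q²) + q S₁(q²)`. -/
def lhsTerm (q z : ℂ) (n : ℕ) : ℂ :=
  q ^ n ^ 2 * z ^ n * qPoch (-q) (q ^ 2) n / qPoch (-q ^ 4 * z) (q ^ 4) n

def rhsTerm (q z : ℂ) (n : ℕ) : ℂ :=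
  q ^ (2 * n ^ 2) * z ^ n * qPoch (-q ^ 2 * z) (q ^ 4) n * (1 + q ^ (4 * n + 1) * z)
    / qPoch (-q ^ 4 * z) (q ^ 4) n

def lhsTelescope (q z : ℂ) (n : ℕ) : ℂ :=
  (1 + q ^ 4 * z) * (1 + q ^ (2 * n + 1) * z) * lhsTerm q z n

def lhs (q z : ℂ) : ℂ := ∑' n, lhsTerm q z n

def rhs (q z : ℂ) : ℂ := ∑' n, rhsTerm q z n

def majorant (q : ℂ) (n : ℕ) : ℝ := ‖q‖ ^ n ^ 2 * (2 / (1 - ‖q‖ ^ 4)) ^ n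

lemma norm_pow_mul_le (hz : ‖z‖ ≤ 1) (k : ℕ) : ‖q ^ k * z‖ ≤ ‖q‖ ^ k := by
  simpa [norm_pow] using mul_le_of_le_one_right (norm_nonneg (q ^ k)) hz

lemma norm_pow_mul_lt_one (hq : ‖q‖ < 1) (hz : ‖z‖ ≤ 1) {k : ℕ} (hk : k ≠ 0) :
    ‖q ^ k * z‖ < 1 :=
  (norm_pow_mul_le hz k).trans_lt (pow_lt_one₀ (norm_nonneg q) hq hk)

lemma one_add_pow_mul_ne_zero (hq : ‖q‖ < 1) (hz : ‖z‖ ≤ 1) {k : ℕ} (hk : k ≠ 0) :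
    1 + q ^ k * z ≠ 0 := fun h ↦ by
  simpa [eq_neg_of_add_eq_zero_right h] using norm_pow_mul_lt_one hq hz hk

lemma norm_pow_four_le_one (hq : ‖q‖ < 1) : ‖q ^ 4‖ ≤ 1 := by
  simpa using pow_le_one₀ (n := 4) (norm_nonneg q) hq.le

lemma qPoch_neg_pow_four_mul_ne_zero (hq : ‖q‖ < 1) (hz : ‖z‖ ≤ 1) (n : ℕ) :
    qPoch (-q ^ 4 * z) (q ^ 4) n ≠ 0 :=
  qPoch_ne_zero (by simpa using norm_pow_mul_lt_one hq hz four_ne_zero) (norm_pow_four_le_one hq) n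

lemma lhsTerm_eq_telescope (hq : ‖q‖ < 1) (hz : ‖z‖ ≤ 1) (n : ℕ) :
    (1 + q ^ 4 * z) * lhsTerm q z n
      = q ^ 2 * z * (1 + q ^ 2 * z) * lhsTerm q (q ^ 4 * z) n
        + (lhsTelescope q z n - lhsTelescope q z (n + 1)) := by
  have hD := qPoch_neg_pow_four_mul_ne_zero hq hz n
  have hA := one_add_pow_mul_ne_zero hq hz four_ne_zero
  have hE : 1 + q ^ 4 * z * (q ^ 4) ^ n ≠ 0 := by
    simpa [← pow_mul, ← pow_add, mul_right_comm _ z] using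
      one_add_pow_mul_ne_zero hq hz (k := 4 + 4 * n) (by omega)
  have ha : -q ^ 4 * z ≠ 1 := fun h ↦ hA (by linear_combination -h)
  rw [lhsTelescope, lhsTelescope, lhsTerm, lhsTerm, lhsTerm, show -q ^ 4 * (q ^ 4 * z) =
    -q ^ 4 * z * q ^ 4 by ring, qPoch_mul_self ha, qPoch_succ, qPoch_succ]
  simp only [neg_mul, sub_neg_eq_add]
  generalize qPoch (-(q ^ 4 * z)) (q ^ 4) n = D at hD ⊢
  field_simp
  ring

lemma rhsTerm_shift (hq : ‖q‖ < 1) (hz : ‖z‖ ≤ 1) (n : ℕ) :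
    q ^ 2 * z * (1 + q ^ 2 * z) * rhsTerm q (q ^ 4 * z) n
      = (1 + q ^ 4 * z) * rhsTerm q z (n + 1) := by
  have hD := qPoch_neg_pow_four_mul_ne_zero hq (norm_pow_mul_lt_one hq hz four_ne_zero).le n
  have hA := one_add_pow_mul_ne_zero hq hz four_ne_zero
  have hQ := qPoch_succ' (-q ^ 2 * z) (q ^ 4) n
  have hD' := qPoch_succ' (-q ^ 4 * z) (q ^ 4) n
  rw [show -q ^ 2 * z * q ^ 4 = -q ^ 2 * (q ^ 4 * z) by ring] at hQ
  rw [show -q ^ 4 * z * q ^ 4 = -q ^ 4 * (q ^ 4 * z) by ring] at hD'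
  rw [rhsTerm, rhsTerm, hQ, hD']
  simp only [neg_mul, sub_neg_eq_add]
  generalize qPoch (-(q ^ 4 * (q ^ 4 * z))) (q ^ 4) n = D at hD ⊢
  field_simp
  ring

lemma summable_majorant (hq : ‖q‖ < 1) : Summable (majorant q) :=
  summable_pow_sq_mul_pow (norm_nonneg q) hq _

lemma norm_pochRatio_le (hq : ‖q‖ < 1) (hz : ‖z‖ ≤ 1) {a p : ℂ} (ha : ‖a‖ ≤ 1) (hp : ‖p‖ ≤ 1)
    {n e : ℕ} (he : n ^ 2 ≤ e) :
    ‖q ^ e * z ^ n * qPoch a p n / qPoch (-q ^ 4 * z) (q ^ 4) n‖ ≤ majorant q n := by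
  have hnum : ‖q ^ e * z ^ n * qPoch a p n‖ ≤ ‖q‖ ^ n ^ 2 * 1 * 2 ^ n := by
    rw [norm_mul, norm_mul, norm_pow, norm_pow]
    refine mul_le_mul (mul_le_mul ?_ ?_ (by positivity) (by positivity)) ?_ (norm_nonneg _)
      (by positivity)
    · exact pow_le_pow_of_le_one (norm_nonneg q) hq.le he
    · exact pow_le_one₀ (norm_nonneg z) hz
    · exact (norm_qPoch_le hp n).trans (pow_le_pow_left₀ (by positivity) (by linarith) n)
  have hc : ‖-q ^ 4 * z‖ ≤ ‖q‖ ^ 4 := by simpa using norm_pow_mul_le hz 4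
  have hden : (1 - ‖q‖ ^ 4) ^ n ≤ ‖qPoch (-q ^ 4 * z) (q ^ 4) n‖ :=
    (pow_le_pow_left₀ (sub_nonneg.2 (pow_le_one₀ (norm_nonneg q) hq.le)) (by linarith) n).trans
      (pow_le_norm_qPoch (by simpa using (norm_pow_mul_lt_one hq hz four_ne_zero).le)
        (norm_pow_four_le_one hq) n)
  have hq4 : 0 < 1 - ‖q‖ ^ 4 := sub_pos.2 (pow_lt_one₀ (norm_nonneg q) hq four_ne_zero)
  rw [norm_div, majorant, div_pow, ← mul_div_assoc, ← mul_one (‖q‖ ^ n ^ 2)]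
  exact div_le_div₀ (by positivity) hnum (pow_pos hq4 n) hden

lemma summable_pochRatio (hq : ‖q‖ < 1) (hz : ‖z‖ ≤ 1) {a p : ℂ} (ha : ‖a‖ ≤ 1)
    (hp : ‖p‖ ≤ 1) {e : ℕ → ℕ} (he : ∀ n, n ^ 2 ≤ e n) :
    Summable fun n ↦ q ^ e n * z ^ n * qPoch a p n / qPoch (-q ^ 4 * z) (q ^ 4) n :=
  (summable_majorant hq).of_norm_bounded fun n ↦ norm_pochRatio_le hq hz ha hp (he n)

lemma norm_lhsTerm_le (hq : ‖q‖ < 1) (hz : ‖z‖ ≤ 1) (n : ℕ) :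
    ‖lhsTerm q z n‖ ≤ majorant q n :=
  norm_pochRatio_le hq hz (by simpa using hq.le)
    (by simpa using pow_le_one₀ (n := 2) (norm_nonneg q) hq.le) le_rfl

lemma norm_one_add_pow_mul_le (hq : ‖q‖ < 1) (hz : ‖z‖ ≤ 1) (k : ℕ) : ‖1 + q ^ k * z‖ ≤ 2 :=
  (norm_add_le _ _).trans <| by
    linarith [norm_one (α := ℂ), norm_pow_mul_le (q := q) hz k,
      pow_le_one₀ (n := k) (norm_nonneg q) hq.le]

lemma norm_rhsTerm_le (hq : ‖q‖ < 1) (hz : ‖z‖ ≤ 1) (n : ℕ) :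
    ‖rhsTerm q z n‖ ≤ 2 * majorant q n := by
  rw [rhsTerm, mul_div_right_comm, norm_mul, mul_comm]
  exact mul_le_mul (norm_one_add_pow_mul_le hq hz _)
    (norm_pochRatio_le hq hz (by simpa using (norm_pow_mul_lt_one hq hz two_ne_zero).le)
      (norm_pow_four_le_one hq) (by nlinarith))
    (norm_nonneg _) zero_le_two

lemma norm_lhsTelescope_le (hq : ‖q‖ < 1) (hz : ‖z‖ ≤ 1) (n : ℕ) :
    ‖lhsTelescope q z n‖ ≤ 2 * 2 * majorant q n := by
  rw [lhsTelescope, norm_mul, norm_mul]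
  gcongr
  exacts [norm_one_add_pow_mul_le hq hz _, norm_one_add_pow_mul_le hq hz _,
    norm_lhsTerm_le hq hz n]

lemma lhs_functional_eq (hq : ‖q‖ < 1) (hz : ‖z‖ ≤ 1) :
    (1 + q ^ 4 * z) * lhs q z
      = (1 + q ^ 4 * z) * (1 + q * z) + q ^ 2 * z * (1 + q ^ 2 * z) * lhs q (q ^ 4 * z) := by
  have hz' := (norm_pow_mul_lt_one hq hz four_ne_zero).le
  have hL := (summable_majorant hq).of_norm_bounded (norm_lhsTerm_le hq hz')
  have hT := ((summable_majorant hq).mul_left (2 * 2)).of_norm_bounded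
    (norm_lhsTelescope_le hq hz)
  rw [lhs, lhs, ← tsum_mul_left, tsum_congr (lhsTerm_eq_telescope hq hz),
    (hL.mul_left _).tsum_add (hT.sub ((summable_nat_add_iff 1).2 hT)), tsum_mul_left,
    tsum_sub_succ hT]
  simp [lhsTelescope, lhsTerm, qPoch_zero]
  ring

lemma rhs_functional_eq (hq : ‖q‖ < 1) (hz : ‖z‖ ≤ 1) :
    (1 + q ^ 4 * z) * rhs q z
      = (1 + q ^ 4 * z) * (1 + q * z) + q ^ 2 * z * (1 + q ^ 2 * z) * rhs q (q ^ 4 * z) := by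
  have hR := ((summable_majorant hq).mul_left 2).of_norm_bounded (norm_rhsTerm_le hq hz)
  rw [rhs, rhs, hR.tsum_eq_zero_add, ← tsum_mul_left, tsum_congr (rhsTerm_shift hq hz),
    tsum_mul_left]
  simp [rhsTerm, qPoch_zero]
  ring

lemma norm_lhs_sub_rhs_le (hq : ‖q‖ < 1) (hz : ‖z‖ ≤ 1) :
    ‖lhs q z - rhs q z‖ ≤ 3 * ∑' n, majorant q n := by
  have hM := (summable_majorant hq).hasSum
  refine (norm_sub_le _ _).trans ?_
  rw [show (3 : ℝ) = 1 + 2 by norm_num, add_mul, one_mul]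
  exact add_le_add (tsum_of_norm_bounded hM (norm_lhsTerm_le hq hz))
    (tsum_of_norm_bounded (hM.mul_left 2) (norm_rhsTerm_le hq hz))

lemma lhs_sub_rhs_eq (hq : ‖q‖ < 1) (hz : ‖z‖ ≤ 1) :
    lhs q z - rhs q z
      = q ^ 2 * z * (1 + q ^ 2 * z) / (1 + q ^ 4 * z)
        * (lhs q (q ^ 4 * z) - rhs q (q ^ 4 * z)) := by
  rw [div_mul_eq_mul_div, eq_div_iff (one_add_pow_mul_ne_zero hq hz four_ne_zero)]
  linear_combination lhs_functional_eq hq hz - rhs_functional_eq hq hz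

theorem lhs_one_eq_rhs_one (hq : ‖q‖ < 1) : lhs q 1 = rhs q 1 := by
  have hw (j : ℕ) : ‖(q ^ 4) ^ j‖ ≤ 1 := by
    simpa using pow_le_one₀ (norm_nonneg _) (norm_pow_four_le_one hq)
  have hβ : Tendsto (fun j : ℕ ↦ q ^ 2 * (q ^ 4) ^ j * (1 + q ^ 2 * (q ^ 4) ^ j)
      / (1 + q ^ 4 * (q ^ 4) ^ j)) atTop (𝓝 0) := by
    have hf : ContinuousAt (fun w : ℂ ↦ q ^ 2 * w * (1 + q ^ 2 * w) / (1 + q ^ 4 * w)) 0 :=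
      ContinuousAt.div (by fun_prop) (by fun_prop) (by simp)
    simpa [Function.comp_def] using hf.tendsto.comp (tendsto_pow_atTop_nhds_zero_of_norm_lt_one
      (by simpa using norm_pow_mul_lt_one hq (z := 1) (by simp) four_ne_zero))
  have h := eq_zero_of_eq_mul_succ (d := fun j ↦ lhs q ((q ^ 4) ^ j) - rhs q ((q ^ 4) ^ j))
    (fun j ↦ by simpa only [pow_succ'] using lhs_sub_rhs_eq hq (hw j)) hβ
    ⟨_, fun j ↦ norm_lhs_sub_rhs_le hq (hw j)⟩ 0
  simpa [sub_eq_zero] using h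

end MockTheta8

end

open MockTheta8

theorem stmt16 (q : ℂ) (hq : ‖q‖ < 1) :
    (∑' n : ℕ, q ^ (n ^ 2) * qPoch (-q) (q ^ 2) n / qPoch (-q ^ 4) (q ^ 4) n)
      = (∑' n : ℕ, (q ^ 2) ^ (n ^ 2) * qPoch (-q ^ 2) (q ^ 4) n / qPoch (-q ^ 4) (q ^ 4) n)
        + q * (∑' n : ℕ, (q ^ 2) ^ (n * (n + 2)) * qPoch (-q ^ 2) (q ^ 4) n
              / qPoch (-q ^ 4) (q ^ 4) n) := by
  have hz : ‖(1 : ℂ)‖ ≤ 1 := norm_one.le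
  have ha : ‖-q ^ 2‖ ≤ 1 := by simpa using pow_le_one₀ (n := 2) (norm_nonneg q) hq.le
  have hp := norm_pow_four_le_one hq
  have hS₀ := summable_pochRatio hq hz ha hp (e := fun n ↦ 2 * n ^ 2) fun n ↦ by nlinarith
  have hS₁ := summable_pochRatio hq hz ha hp (e := fun n ↦ 2 * (n * (n + 2))) fun n ↦ by nlinarith
  simp only [one_pow, mul_one, pow_mul q 2] at hS₀ hS₁
  calc _ = lhs q 1 := tsum_congr fun n ↦ by simp [lhsTerm]
    _ = rhs q 1 := lhs_one_eq_rhs_one hq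
    _ = _ := by
      rw [rhs, ← tsum_mul_left, ← hS₀.tsum_add (hS₁.mul_left q)]
      refine tsum_congr fun n ↦ ?_
      simp only [rhsTerm, one_pow, mul_one]
      ring
end
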